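/- arXiv:2406.16249 — 8 statements merged into one kernel-verified Lean document; each statement's English description precedes it below -/
import Mathlib

section
/- Let P and P̂ be row-stochastic matrices on a finite state space S such that every row satisfies ∑_{s'} min(P_{s,s'}, P̂_{s,s'}) ≥ 1 - ε/2 for some ε ∈ [0,2]. For probability vectors μ, μ̂ (rows of t-step distributions), if ∑_s min(μ_s, μ̂_s) ≥ c, then ∑_{s'} min((μP)_{s'}, (μ̂P̂)_{s'}) ≥ c·(1 - ε/2). In particular, the overlap of the t-step distributions starting from a common initial state is at least (1 - ε/2)^t. -/
/-!
Mass `min (μ s) (μ̂ s)` that the two distributions share at `s` is pushed forward along the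
common part `min (P s s') (P̂ s s')` of the two rows, of total mass at least `1 - ε / 2`; what
arrives at `s'` is below both `(μ P) s'` and `(μ̂ P̂) s'`. Hence each step keeps at least the
fraction `1 - ε / 2` of the overlap, and the `t`-step bound follows by induction from
overlap `1` at `t = 0`.
-/

open Finset

section Overlap

variable {S : Type*} [Fintype S] {μ ν : S → ℝ} {P Q : Matrix S S ℝ}

theorem sum_min_mul_min_le_min_sum_mul (hμ : ∀ s, 0 ≤ μ s) (hν : ∀ s, 0 ≤ ν s)
    (hP : ∀ s s', 0 ≤ P s s') (hQ : ∀ s s', 0 ≤ Q s s') (s' : S) :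
    ∑ s, min (μ s) (ν s) * min (P s s') (Q s s') ≤
      min (∑ s, μ s * P s s') (∑ s, ν s * Q s s') := by
  have hPQ (s : S) : 0 ≤ min (P s s') (Q s s') := le_min (hP s s') (hQ s s')
  refine le_min (sum_le_sum fun s _ => ?_) (sum_le_sum fun s _ => ?_)
  · exact mul_le_mul (min_le_left _ _) (min_le_left _ _) (hPQ s) (hμ s)
  · exact mul_le_mul (min_le_right _ _) (min_le_right _ _) (hPQ s) (hν s)

theorem sum_min_mul_le_sum_min_sum_mul {δ : ℝ} (hμ : ∀ s, 0 ≤ μ s) (hν : ∀ s, 0 ≤ ν s)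
    (hP : ∀ s s', 0 ≤ P s s') (hQ : ∀ s s', 0 ≤ Q s s')
    (hrow : ∀ s, δ ≤ ∑ s', min (P s s') (Q s s')) :
    (∑ s, min (μ s) (ν s)) * δ ≤
      ∑ s', min (∑ s, μ s * P s s') (∑ s, ν s * Q s s') :=
  calc (∑ s, min (μ s) (ν s)) * δ
      = ∑ s, min (μ s) (ν s) * δ := sum_mul _ _ _
    _ ≤ ∑ s, min (μ s) (ν s) * ∑ s', min (P s s') (Q s s') :=
        sum_le_sum fun s _ => mul_le_mul_of_nonneg_left (hrow s) (le_min (hμ s) (hν s))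
    _ = ∑ s', ∑ s, min (μ s) (ν s) * min (P s s') (Q s s') := by
        simp_rw [mul_sum]
        exact sum_comm
    _ ≤ ∑ s', min (∑ s, μ s * P s s') (∑ s, ν s * Q s s') :=
        sum_le_sum fun s' _ => sum_min_mul_min_le_min_sum_mul hμ hν hP hQ s'

end Overlap

theorem overlap_propagation_general {S : Type*} [Fintype S] [DecidableEq S]
    (P Phat : Matrix S S ℝ) (ε : ℝ) (hε2 : ε ≤ 2)
    (hP : ∀ s s', 0 ≤ P s s')
    (hPhat : ∀ s s', 0 ≤ Phat s s')
    (hover : ∀ s, 1 - ε / 2 ≤ ∑ s', min (P s s') (Phat s s')) :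
    (∀ (μ μhat : S → ℝ) (c : ℝ),
        (∀ s, 0 ≤ μ s) → (∑ s, μ s = 1) →
        (∀ s, 0 ≤ μhat s) → (∑ s, μhat s = 1) →
        c ≤ ∑ s, min (μ s) (μhat s) →
        c * (1 - ε / 2) ≤
          ∑ s', min (∑ s, μ s * P s s') (∑ s, μhat s * Phat s s')) ∧
    (∀ (t : ℕ) (s₀ : S),
        (1 - ε / 2) ^ t ≤ ∑ s, min ((P ^ t) s₀ s) ((Phat ^ t) s₀ s)) := by
  have hδ : 0 ≤ 1 - ε / 2 := by linarith
  refine ⟨fun μ μhat c hμ _ hμhat _ hc =>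
    (mul_le_mul_of_nonneg_right hc hδ).trans
      (sum_min_mul_le_sum_min_sum_mul hμ hμhat hP hPhat hover), fun t s₀ => ?_⟩
  induction t with
  | zero => simp [Matrix.one_apply]
  | succ t ih =>
    simp only [pow_succ, Matrix.mul_apply]
    exact (mul_le_mul_of_nonneg_right ih hδ).trans
      (sum_min_mul_le_sum_min_sum_mul (Matrix.pow_apply_nonneg hP t s₀)
        (Matrix.pow_apply_nonneg hPhat t s₀) hP hPhat hover)

/-- Overlap propagation: one-step retention of overlap, and the t-step consequence. -/
theorem overlap_propagation {S : Type*} [Fintype S] [DecidableEq S]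
    (P Phat : Matrix S S ℝ) (ε : ℝ) (hε0 : 0 ≤ ε) (hε2 : ε ≤ 2)
    (hP : ∀ s s', 0 ≤ P s s') (hProw : ∀ s, ∑ s', P s s' = 1)
    (hPhat : ∀ s s', 0 ≤ Phat s s') (hPhatrow : ∀ s, ∑ s', Phat s s' = 1)
    (hover : ∀ s, 1 - ε / 2 ≤ ∑ s', min (P s s') (Phat s s')) :
    (∀ (μ μhat : S → ℝ) (c : ℝ),
        (∀ s, 0 ≤ μ s) → (∑ s, μ s = 1) →
        (∀ s, 0 ≤ μhat s) → (∑ s, μhat s = 1) →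
        c ≤ ∑ s, min (μ s) (μhat s) →
        c * (1 - ε / 2) ≤
          ∑ s', min (∑ s, μ s * P s s') (∑ s, μhat s * Phat s s')) ∧
    (∀ (t : ℕ) (s₀ : S),
        (1 - ε / 2) ^ t ≤ ∑ s, min ((P ^ t) s₀ s) ((Phat ^ t) s₀ s)) :=
  overlap_propagation_general P Phat ε hε2 hP hPhat hover
end

section
/- Let P, P̂ be row-stochastic matrices on a finite state space with every row satisfying ∑_{s'} min(P_{s,s'}, P̂_{s,s'}) ≥ 1 - ε_T/2, and let R, R̂ : S → [0,1] with ‖R - R̂‖_∞ ≤ ε_R. Fix γ ∈ [0,1) and define values V_s = ∑_{t=0}^∞ γ^t ⟨(P^t)_s, R⟩ and V̂_s = ∑_{t=0}^∞ γ^t ⟨(P̂^t)_s, R̂⟩. Then for all s, |V_s - V̂_s| ≤ 1/(1-γ) - (1-ε_R)/(1 - γ(1 - ε_T/2)). -/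
/-!
Couple the two chains maximally at every step: the overlap of the `t`-step distributions from
any state is at least `(1 - εT/2) ^ t`. On the overlapping mass the rewards differ by at most
`εR`, on the rest by at most `1`, so the `t`-th terms of the two value series differ by at most
`γ ^ t (1 - (1 - εR) (1 - εT/2) ^ t)`; summing the two geometric series gives the bound.
-/

open Finset Matrix

def overlap {S : Type*} [Fintype S] (p q : S → ℝ) : ℝ := ∑ s, min (p s) (q s)

lemma overlap_comm {S : Type*} [Fintype S] (p q : S → ℝ) : overlap p q = overlap q p := by
  simp only [overlap, min_comm]

lemma mul_sub_mul_le_sub_mul_min {p q r₁ r₂ ε : ℝ} (hp : 0 ≤ p) (hq : 0 ≤ q)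
    (hr₁ : r₁ ≤ 1) (hr₂ : 0 ≤ r₂) (hr : r₁ - r₂ ≤ ε) :
    p * r₁ - q * r₂ ≤ p - (1 - ε) * min p q := by
  rcases min_cases p q with ⟨hm, hpq⟩ | ⟨hm, hqp⟩ <;> rw [hm]
  · nlinarith
  · nlinarith

section Distributions

variable {S : Type*} [Fintype S] {p q r₁ r₂ : S → ℝ} {ε : ℝ}

lemma sum_mul_sub_sum_mul_le_one_sub_overlap (hp : ∀ s, 0 ≤ p s) (hq : ∀ s, 0 ≤ q s)
    (hp₁ : ∑ s, p s = 1) (hr₁ : ∀ s, r₁ s ≤ 1) (hr₂ : ∀ s, 0 ≤ r₂ s)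
    (hr : ∀ s, r₁ s - r₂ s ≤ ε) :
    ∑ s, p s * r₁ s - ∑ s, q s * r₂ s ≤ 1 - (1 - ε) * overlap p q :=
  calc ∑ s, p s * r₁ s - ∑ s, q s * r₂ s = ∑ s, (p s * r₁ s - q s * r₂ s) :=
        (sum_sub_distrib _ _).symm
    _ ≤ ∑ s, (p s - (1 - ε) * min (p s) (q s)) :=
        sum_le_sum fun s _ => mul_sub_mul_le_sub_mul_min (hp s) (hq s) (hr₁ s) (hr₂ s) (hr s)
    _ = 1 - (1 - ε) * overlap p q := by rw [sum_sub_distrib, hp₁, ← mul_sum, overlap]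

lemma abs_sum_mul_sub_sum_mul_le_one_sub_overlap (hp : ∀ s, 0 ≤ p s) (hq : ∀ s, 0 ≤ q s)
    (hp₁ : ∑ s, p s = 1) (hq₁ : ∑ s, q s = 1) (hr₁ : ∀ s, r₁ s ∈ Set.Icc (0 : ℝ) 1)
    (hr₂ : ∀ s, r₂ s ∈ Set.Icc (0 : ℝ) 1) (hr : ∀ s, |r₁ s - r₂ s| ≤ ε) :
    |∑ s, p s * r₁ s - ∑ s, q s * r₂ s| ≤ 1 - (1 - ε) * overlap p q := by
  rw [abs_sub_le_iff]
  constructor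
  · exact sum_mul_sub_sum_mul_le_one_sub_overlap hp hq hp₁ (fun s => (hr₁ s).2)
      (fun s => (hr₂ s).1) fun s => (le_abs_self _).trans (hr s)
  · rw [overlap_comm]
    exact sum_mul_sub_sum_mul_le_one_sub_overlap hq hp hq₁ (fun s => (hr₂ s).2)
      (fun s => (hr₁ s).1) fun s => (le_abs_self _).trans ((abs_sub_comm _ _).trans_le (hr s))

lemma abs_sum_mul_le_one (hp : ∀ s, 0 ≤ p s) (hp₁ : ∑ s, p s = 1)
    (hr : ∀ s, r₁ s ∈ Set.Icc (0 : ℝ) 1) : |∑ s, p s * r₁ s| ≤ 1 := by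
  rw [abs_le]
  constructor
  · linarith [sum_nonneg fun s (_ : s ∈ univ) => mul_nonneg (hp s) (hr s).1]
  · calc ∑ s, p s * r₁ s ≤ ∑ s, p s :=
          sum_le_sum fun s _ => mul_le_of_le_one_right (hp s) (hr s).2
      _ = 1 := hp₁

end Distributions

section Overlap

variable {S : Type*} [Fintype S]

lemma mul_overlap_le_overlap_mul {A B C D : Matrix S S ℝ} {α : ℝ}
    (hA : ∀ i j, 0 ≤ A i j) (hB : ∀ i j, 0 ≤ B i j) (hC : ∀ i j, 0 ≤ C i j)
    (hD : ∀ i j, 0 ≤ D i j) (hCD : ∀ k, α ≤ overlap (C k) (D k)) (i : S) :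
    α * overlap (A i) (B i) ≤ overlap ((A * C) i) ((B * D) i) := by
  have hmin : ∀ j, ∑ k, min (A i k) (B i k) * min (C k j) (D k j)
      ≤ min ((A * C) i j) ((B * D) i j) := fun j => by
    rw [mul_apply, mul_apply]
    exact le_min
      (sum_le_sum fun k _ => mul_le_mul (min_le_left _ _) (min_le_left _ _)
        (le_min (hC k j) (hD k j)) (hA i k))
      (sum_le_sum fun k _ => mul_le_mul (min_le_right _ _) (min_le_right _ _)
        (le_min (hC k j) (hD k j)) (hB i k))
  calc α * overlap (A i) (B i) = ∑ k, min (A i k) (B i k) * α := by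
        rw [overlap, mul_sum]; simp only [mul_comm]
    _ ≤ ∑ k, min (A i k) (B i k) * overlap (C k) (D k) :=
        sum_le_sum fun k _ => mul_le_mul_of_nonneg_left (hCD k) (le_min (hA i k) (hB i k))
    _ = ∑ j, ∑ k, min (A i k) (B i k) * min (C k j) (D k j) := by
        simp only [overlap, mul_sum]; exact sum_comm
    _ ≤ overlap ((A * C) i) ((B * D) i) := sum_le_sum fun j _ => hmin j

lemma pow_le_overlap_pow [DecidableEq S] {P Q : Matrix S S ℝ} {α : ℝ} (hα : 0 ≤ α)
    (hP : P ∈ rowStochastic ℝ S) (hQ : Q ∈ rowStochastic ℝ S)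
    (hPQ : ∀ s, α ≤ overlap (P s) (Q s)) (t : ℕ) (s : S) :
    α ^ t ≤ overlap ((P ^ t) s) ((Q ^ t) s) := by
  induction t generalizing s with
  | zero => simp [overlap, one_apply]
  | succ t ih =>
    calc α ^ (t + 1) ≤ α * overlap ((P ^ t) s) ((Q ^ t) s) := by
          rw [pow_succ']; exact mul_le_mul_of_nonneg_left (ih s) hα
      _ ≤ overlap ((P ^ (t + 1)) s) ((Q ^ (t + 1)) s) := by
          rw [pow_succ, pow_succ]
          exact mul_overlap_le_overlap_mul (pow_mem hP t).1 (pow_mem hQ t).1 hP.1 hQ.1 hPQ s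

end Overlap

lemma abs_tsum_geometric_mul_sub_le {a b : ℕ → ℝ} {γ α c : ℝ} (hγ0 : 0 ≤ γ) (hγ1 : γ < 1)
    (hα0 : 0 ≤ α) (hα1 : α ≤ 1) (ha : ∀ t, |a t| ≤ 1) (hb : ∀ t, |b t| ≤ 1)
    (hab : ∀ t, |a t - b t| ≤ 1 - c * α ^ t) :
    |∑' t, γ ^ t * a t - ∑' t, γ ^ t * b t| ≤ 1 / (1 - γ) - c / (1 - γ * α) := by
  have hγα1 : γ * α < 1 := (mul_le_of_le_one_right hγ0 hα1).trans_lt hγ1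
  have hgeom : Summable (fun t : ℕ => γ ^ t) := summable_geometric_of_lt_one hγ0 hγ1
  have hsummable : ∀ f : ℕ → ℝ, (∀ t, |f t| ≤ 1) → Summable fun t => γ ^ t * f t :=
    fun f hf => hgeom.of_norm_bounded fun t => by
      rw [Real.norm_eq_abs, abs_mul, abs_of_nonneg (pow_nonneg hγ0 t)]
      exact mul_le_of_le_one_right (pow_nonneg hγ0 t) (hf t)
  have hbound : HasSum (fun t : ℕ => γ ^ t - c * (γ * α) ^ t) (1 / (1 - γ) - c / (1 - γ * α)) := by
    rw [one_div, div_eq_mul_inv]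
    exact (hasSum_geometric_of_lt_one hγ0 hγ1).sub
      ((hasSum_geometric_of_lt_one (mul_nonneg hγ0 hα0) hγα1).mul_left c)
  rw [← (hsummable a ha).tsum_sub (hsummable b hb), ← Real.norm_eq_abs]
  refine tsum_of_norm_bounded hbound fun t => ?_
  rw [Real.norm_eq_abs, ← mul_sub, abs_mul, abs_of_nonneg (pow_nonneg hγ0 t), mul_pow]
  calc γ ^ t * |a t - b t| ≤ γ ^ t * (1 - c * α ^ t) :=
        mul_le_mul_of_nonneg_left (hab t) (pow_nonneg hγ0 t)
    _ = γ ^ t - c * (γ ^ t * α ^ t) := by ring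

theorem tight_simulation_lemma_general {S : Type*} [Fintype S] [DecidableEq S]
    (P Phat : Matrix S S ℝ) (R Rhat : S → ℝ) (γ εT εR : ℝ)
    (hγ0 : 0 ≤ γ) (hγ1 : γ < 1)
    (hεT0 : 0 ≤ εT) (hεT2 : εT ≤ 2) (hεR1 : εR ≤ 1)
    (hP : ∀ s s', 0 ≤ P s s') (hProw : ∀ s, ∑ s', P s s' = 1)
    (hPhat : ∀ s s', 0 ≤ Phat s s') (hPhatrow : ∀ s, ∑ s', Phat s s' = 1)
    (hover : ∀ s, 1 - εT / 2 ≤ ∑ s', min (P s s') (Phat s s'))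
    (hR : ∀ s, R s ∈ Set.Icc (0 : ℝ) 1) (hRhat : ∀ s, Rhat s ∈ Set.Icc (0 : ℝ) 1)
    (hRdiff : ∀ s, |R s - Rhat s| ≤ εR)
    (V Vhat : S → ℝ)
    (hV : ∀ s, V s = ∑' t : ℕ, γ ^ t * ∑ s', (P ^ t) s s' * R s')
    (hVhat : ∀ s, Vhat s = ∑' t : ℕ, γ ^ t * ∑ s', (Phat ^ t) s s' * Rhat s') :
    ∀ s, |V s - Vhat s| ≤ 1 / (1 - γ) - (1 - εR) / (1 - γ * (1 - εT / 2)) := by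
  intro s
  have hPs : P ∈ rowStochastic ℝ S := mem_rowStochastic_iff_sum.2 ⟨hP, hProw⟩
  have hPhats : Phat ∈ rowStochastic ℝ S := mem_rowStochastic_iff_sum.2 ⟨hPhat, hPhatrow⟩
  have hPt t := mem_rowStochastic_iff_sum.1 (pow_mem hPs t)
  have hPhatt t := mem_rowStochastic_iff_sum.1 (pow_mem hPhats t)
  rw [hV, hVhat]
  refine abs_tsum_geometric_mul_sub_le hγ0 hγ1 (by linarith) (by linarith)
    (fun t => abs_sum_mul_le_one ((hPt t).1 s) ((hPt t).2 s) hR)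
    (fun t => abs_sum_mul_le_one ((hPhatt t).1 s) ((hPhatt t).2 s) hRhat) fun t => ?_
  have hoverlap := pow_le_overlap_pow (by linarith) hPs hPhats hover t s
  calc _ ≤ 1 - (1 - εR) * overlap ((P ^ t) s) ((Phat ^ t) s) :=
        abs_sum_mul_sub_sum_mul_le_one_sub_overlap ((hPt t).1 s) ((hPhatt t).1 s)
          ((hPt t).2 s) ((hPhatt t).2 s) hR hRhat hRdiff
    _ ≤ 1 - (1 - εR) * (1 - εT / 2) ^ t :=
        sub_le_sub_left (mul_le_mul_of_nonneg_left hoverlap (sub_nonneg.2 hεR1)) 1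

/-- Tight simulation lemma. -/
theorem tight_simulation_lemma {S : Type*} [Fintype S] [DecidableEq S]
    (P Phat : Matrix S S ℝ) (R Rhat : S → ℝ) (γ εT εR : ℝ)
    (hγ0 : 0 ≤ γ) (hγ1 : γ < 1)
    (hεT0 : 0 ≤ εT) (hεT2 : εT ≤ 2) (hεR0 : 0 ≤ εR) (hεR1 : εR ≤ 1)
    (hP : ∀ s s', 0 ≤ P s s') (hProw : ∀ s, ∑ s', P s s' = 1)
    (hPhat : ∀ s s', 0 ≤ Phat s s') (hPhatrow : ∀ s, ∑ s', Phat s s' = 1)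
    (hover : ∀ s, 1 - εT / 2 ≤ ∑ s', min (P s s') (Phat s s'))
    (hR : ∀ s, R s ∈ Set.Icc (0 : ℝ) 1) (hRhat : ∀ s, Rhat s ∈ Set.Icc (0 : ℝ) 1)
    (hRdiff : ∀ s, |R s - Rhat s| ≤ εR)
    (V Vhat : S → ℝ)
    (hV : ∀ s, V s = ∑' t : ℕ, γ ^ t * ∑ s', (P ^ t) s s' * R s')
    (hVhat : ∀ s, Vhat s = ∑' t : ℕ, γ ^ t * ∑ s', (Phat ^ t) s s' * Rhat s') :
    ∀ s, |V s - Vhat s| ≤ 1 / (1 - γ) - (1 - εR) / (1 - γ * (1 - εT / 2)) :=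
  tight_simulation_lemma_general P Phat R Rhat γ εT εR hγ0 hγ1 hεT0 hεT2 hεR1 hP hProw hPhat
    hPhatrow hover hR hRhat hRdiff V Vhat hV hVhat
end

section
/- Under the hypotheses of the tight simulation lemma (rows of P, P̂ within L1 distance ε_T, rewards in [0,1] within sup-distance ε_R, discount γ ∈ [0,1)), the classical simulation lemma holds: for all states s, |V_s - V̂_s| ≤ ε_R/(1-γ) + γ·ε_T/(2(1-γ)²). -/
/-!
Write `V - V̂ = ∑ γ^t (P^t R - P̂^t R̂)` and split each term as `P^t (R - R̂) + (P^t - P̂^t) R̂`.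
The first part is at most `ε_R` because `P^t` is stochastic. Rows of `P^t` and `P̂^t` are
within `L¹` distance `t ε_T` by telescoping `P^(t+1) - P̂^(t+1) = (P^t - P̂^t) P + P̂^t (P - P̂)`,
and since their difference has total mass zero, pairing it with `R̂ ∈ [0, 1]` costs only half of
that distance (recentre `R̂` at `1/2`). Summing `γ^t (ε_R + t ε_T / 2)` gives the bound.
-/

open Finset

theorem abs_sum_sub_mul_le_of_sum_eq {ι : Type*} (s : Finset ι) {p q w : ι → ℝ} {a b : ℝ}
    (hpq : ∑ i ∈ s, p i = ∑ i ∈ s, q i) (hw : ∀ i ∈ s, w i ∈ Set.Icc a b) :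
    |∑ i ∈ s, (p i - q i) * w i| ≤ (b - a) / 2 * ∑ i ∈ s, |p i - q i| := by
  have hcentre : ∑ i ∈ s, (p i - q i) * w i = ∑ i ∈ s, (p i - q i) * (w i - (a + b) / 2) := by
    simp only [mul_sub, sum_sub_distrib, ← sum_mul, hpq, sub_self, zero_mul, sub_zero]
  rw [hcentre, mul_sum]
  refine (abs_sum_le_sum_abs _ _).trans (sum_le_sum fun i hi => ?_)
  obtain ⟨hwa, hwb⟩ := hw i hi
  rw [abs_mul, mul_comm]
  exact mul_le_mul_of_nonneg_right (abs_le.2 ⟨by linarith, by linarith⟩) (abs_nonneg _)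

namespace Matrix

variable {n : Type*} [Fintype n] [DecidableEq n]

theorem abs_sum_mul_le_of_mem_rowStochastic {M : Matrix n n ℝ} (hM : M ∈ rowStochastic ℝ n)
    {w : n → ℝ} {c : ℝ} (hw : ∀ j, |w j| ≤ c) (i : n) :
    |∑ j, M i j * w j| ≤ c :=
  calc |∑ j, M i j * w j| ≤ ∑ j, M i j * c := by
        refine (abs_sum_le_sum_abs _ _).trans (sum_le_sum fun j _ => ?_)
        rw [abs_mul, abs_of_nonneg (nonneg_of_mem_rowStochastic hM)]
        exact mul_le_mul_of_nonneg_left (hw j) (nonneg_of_mem_rowStochastic hM)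
    _ = c := by rw [← sum_mul, sum_row_of_mem_rowStochastic hM, one_mul]

theorem summable_geometric_mul_sum_pow_mul {M : Matrix n n ℝ} (hM : M ∈ rowStochastic ℝ n)
    {γ : ℝ} (hγ0 : 0 ≤ γ) (hγ1 : γ < 1) (w : n → ℝ) (i : n) :
    Summable fun t : ℕ => γ ^ t * ∑ j, (M ^ t) i j * w j := by
  refine (summable_geometric_of_lt_one hγ0 hγ1).mul_right (∑ j, |w j|)
    |>.of_norm_bounded fun t => ?_
  rw [Real.norm_eq_abs, abs_mul, abs_of_nonneg (pow_nonneg hγ0 t)]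
  refine mul_le_mul_of_nonneg_left ?_ (pow_nonneg hγ0 t)
  exact abs_sum_mul_le_of_mem_rowStochastic (pow_mem hM t)
    (fun j => single_le_sum (f := fun j => |w j|) (fun _ _ => abs_nonneg _) (mem_univ j)) i

theorem sum_abs_mul_sub_mul_le {A B C D : Matrix n n ℝ} (hB : B ∈ rowStochastic ℝ n)
    (hC : C ∈ rowStochastic ℝ n) {δ : ℝ} (hBD : ∀ k, ∑ j, |B k j - D k j| ≤ δ) (i : n) :
    ∑ j, |(A * B - C * D) i j| ≤ ∑ k, |A i k - C i k| + δ := by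
  have hsplit : ∀ j, (A * B - C * D) i j
      = ∑ k, ((A i k - C i k) * B k j + C i k * (B k j - D k j)) := fun j => by
    simp only [sub_apply, mul_apply, ← sum_sub_distrib]
    exact sum_congr rfl fun k _ => by ring
  calc ∑ j, |(A * B - C * D) i j|
      ≤ ∑ j, ∑ k, (|A i k - C i k| * B k j + C i k * |B k j - D k j|) := by
        refine sum_le_sum fun j _ => ?_
        rw [hsplit]
        refine (abs_sum_le_sum_abs _ _).trans (sum_le_sum fun k _ => ?_)
        refine (abs_add_le _ _).trans_eq ?_
        rw [abs_mul, abs_mul, abs_of_nonneg (nonneg_of_mem_rowStochastic hB),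
          abs_of_nonneg (nonneg_of_mem_rowStochastic hC)]
    _ = ∑ k, (|A i k - C i k| * ∑ j, B k j + C i k * ∑ j, |B k j - D k j|) := by
        rw [sum_comm]
        simp only [sum_add_distrib, mul_sum]
    _ ≤ ∑ k, (|A i k - C i k| + C i k * δ) := by
        refine sum_le_sum fun k _ => ?_
        rw [sum_row_of_mem_rowStochastic hB, mul_one]
        exact add_le_add_right (mul_le_mul_of_nonneg_left (hBD k)
          (nonneg_of_mem_rowStochastic hC)) _
    _ = ∑ k, |A i k - C i k| + δ := by
        rw [sum_add_distrib, ← sum_mul, sum_row_of_mem_rowStochastic hC, one_mul]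

theorem sum_abs_pow_sub_pow_le {P Q : Matrix n n ℝ} (hP : P ∈ rowStochastic ℝ n)
    (hQ : Q ∈ rowStochastic ℝ n) {ε : ℝ} (hPQ : ∀ i, ∑ j, |P i j - Q i j| ≤ ε) (t : ℕ) (i : n) :
    ∑ j, |(P ^ t) i j - (Q ^ t) i j| ≤ t * ε := by
  induction t generalizing i with
  | zero => simp
  | succ t ih =>
    calc ∑ j, |(P ^ (t + 1)) i j - (Q ^ (t + 1)) i j|
        ≤ ∑ k, |(P ^ t) i k - (Q ^ t) i k| + ε := by
          simpa only [pow_succ, sub_apply] using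
            sum_abs_mul_sub_mul_le (A := P ^ t) hP (pow_mem hQ t) hPQ i
      _ ≤ (t + 1 : ℕ) * ε := by push_cast; linarith [ih i]

theorem abs_sum_pow_mul_sub_sum_pow_mul_le {P Q : Matrix n n ℝ} (hP : P ∈ rowStochastic ℝ n)
    (hQ : Q ∈ rowStochastic ℝ n) {εT εR : ℝ} (hPQ : ∀ i, ∑ j, |P i j - Q i j| ≤ εT)
    {v w : n → ℝ} (hw : ∀ j, w j ∈ Set.Icc (0 : ℝ) 1) (hvw : ∀ j, |v j - w j| ≤ εR)
    (t : ℕ) (i : n) :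
    |∑ j, (P ^ t) i j * v j - ∑ j, (Q ^ t) i j * w j| ≤ εR + t * (εT / 2) := by
  have hsplit : ∑ j, (P ^ t) i j * v j - ∑ j, (Q ^ t) i j * w j
      = ∑ j, (P ^ t) i j * (v j - w j) + ∑ j, ((P ^ t) i j - (Q ^ t) i j) * w j := by
    simp only [mul_sub, sub_mul, sum_sub_distrib]
    ring
  have hreward : |∑ j, (P ^ t) i j * (v j - w j)| ≤ εR :=
    abs_sum_mul_le_of_mem_rowStochastic (pow_mem hP t) hvw i
  have htransition : |∑ j, ((P ^ t) i j - (Q ^ t) i j) * w j| ≤ t * (εT / 2) := by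
    have hmass : ∑ j, (P ^ t) i j = ∑ j, (Q ^ t) i j := by
      rw [sum_row_of_mem_rowStochastic (pow_mem hP t),
        sum_row_of_mem_rowStochastic (pow_mem hQ t)]
    refine (abs_sum_sub_mul_le_of_sum_eq _ hmass fun j _ => hw j).trans ?_
    linarith [sum_abs_pow_sub_pow_le hP hQ hPQ t i]
  rw [hsplit]
  exact (abs_add_le _ _).trans (add_le_add hreward htransition)

end Matrix

theorem abs_tsum_geometric_mul_sub_le_s6 {x y : ℕ → ℝ} {γ α β : ℝ} (hγ0 : 0 ≤ γ) (hγ1 : γ < 1)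
    (hx : Summable fun t => γ ^ t * x t) (hy : Summable fun t => γ ^ t * y t)
    (hxy : ∀ t, |x t - y t| ≤ α + t * β) :
    |∑' t, γ ^ t * x t - ∑' t, γ ^ t * y t| ≤ α / (1 - γ) + γ * β / (1 - γ) ^ 2 := by
  have hgeom := (hasSum_geometric_of_lt_one hγ0 hγ1).mul_right α
  have harith := (hasSum_coe_mul_geometric_of_norm_lt_one
    (by rwa [Real.norm_of_nonneg hγ0] : ‖γ‖ < 1)).mul_right β
  rw [← hx.tsum_sub hy, ← Real.norm_eq_abs]
  refine (tsum_of_norm_bounded (hgeom.add harith) fun t => ?_).trans_eq (by ring)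
  rw [Real.norm_eq_abs, ← mul_sub, abs_mul, abs_of_nonneg (pow_nonneg hγ0 t)]
  linarith [mul_le_mul_of_nonneg_left (hxy t) (pow_nonneg hγ0 t)]

theorem classical_simulation_lemma_general {S : Type*} [Fintype S] [DecidableEq S]
    (P Phat : Matrix S S ℝ) (R Rhat : S → ℝ) (γ εT εR : ℝ)
    (hγ0 : 0 ≤ γ) (hγ1 : γ < 1)
    (hP : ∀ s s', 0 ≤ P s s') (hProw : ∀ s, ∑ s', P s s' = 1)
    (hPhat : ∀ s s', 0 ≤ Phat s s') (hPhatrow : ∀ s, ∑ s', Phat s s' = 1)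
    (hTdiff : ∀ s, ∑ s', |P s s' - Phat s s'| ≤ εT)
    (hRhat : ∀ s, Rhat s ∈ Set.Icc (0 : ℝ) 1)
    (hRdiff : ∀ s, |R s - Rhat s| ≤ εR)
    (V Vhat : S → ℝ)
    (hV : ∀ s, V s = ∑' t : ℕ, γ ^ t * ∑ s', (P ^ t) s s' * R s')
    (hVhat : ∀ s, Vhat s = ∑' t : ℕ, γ ^ t * ∑ s', (Phat ^ t) s s' * Rhat s') :
    ∀ s, |V s - Vhat s| ≤ εR / (1 - γ) + γ * εT / (2 * (1 - γ) ^ 2) := by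
  have hPsto : P ∈ Matrix.rowStochastic ℝ S := Matrix.mem_rowStochastic_iff_sum.2 ⟨hP, hProw⟩
  have hPhatsto : Phat ∈ Matrix.rowStochastic ℝ S :=
    Matrix.mem_rowStochastic_iff_sum.2 ⟨hPhat, hPhatrow⟩
  intro s
  rw [hV, hVhat]
  calc _ ≤ εR / (1 - γ) + γ * (εT / 2) / (1 - γ) ^ 2 :=
        abs_tsum_geometric_mul_sub_le_s6 hγ0 hγ1
          (Matrix.summable_geometric_mul_sum_pow_mul hPsto hγ0 hγ1 R s)
          (Matrix.summable_geometric_mul_sum_pow_mul hPhatsto hγ0 hγ1 Rhat s)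
          (Matrix.abs_sum_pow_mul_sub_sum_pow_mul_le hPsto hPhatsto hTdiff hRhat hRdiff · s)
    _ = εR / (1 - γ) + γ * εT / (2 * (1 - γ) ^ 2) := by
        rw [mul_div_assoc', div_div, mul_comm 2]

/-- Classical simulation lemma. -/
theorem classical_simulation_lemma {S : Type*} [Fintype S] [DecidableEq S]
    (P Phat : Matrix S S ℝ) (R Rhat : S → ℝ) (γ εT εR : ℝ)
    (hγ0 : 0 ≤ γ) (hγ1 : γ < 1)
    (hP : ∀ s s', 0 ≤ P s s') (hProw : ∀ s, ∑ s', P s s' = 1)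
    (hPhat : ∀ s s', 0 ≤ Phat s s') (hPhatrow : ∀ s, ∑ s', Phat s s' = 1)
    (hTdiff : ∀ s, ∑ s', |P s s' - Phat s s'| ≤ εT)
    (hR : ∀ s, R s ∈ Set.Icc (0 : ℝ) 1) (hRhat : ∀ s, Rhat s ∈ Set.Icc (0 : ℝ) 1)
    (hRdiff : ∀ s, |R s - Rhat s| ≤ εR)
    (V Vhat : S → ℝ)
    (hV : ∀ s, V s = ∑' t : ℕ, γ ^ t * ∑ s', (P ^ t) s s' * R s')
    (hVhat : ∀ s, Vhat s = ∑' t : ℕ, γ ^ t * ∑ s', (Phat ^ t) s s' * Rhat s') :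
    ∀ s, |V s - Vhat s| ≤ εR / (1 - γ) + γ * εT / (2 * (1 - γ) ^ 2) :=
  classical_simulation_lemma_general P Phat R Rhat γ εT εR hγ0 hγ1 hP hProw hPhat hPhatrow hTdiff
    hRhat hRdiff V Vhat hV hVhat
end

section
/- The tight bound is at most the classical bound: for all γ ∈ [0,1), ε_T ∈ [0,2], ε_R ∈ [0,1], we have 1/(1-γ) - (1-ε_R)/(1 - γ(1-ε_T/2)) ≤ ε_R/(1-γ) + γ·ε_T/(2(1-γ)²). -/
/-!
With `a = 1 - γ` and `d = 1 - γ (1 - ε_T / 2)` we have `0 < a ≤ d` and `d - a = γ ε_T / 2`.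
Splitting `1/a - (1 - ε_R)/d = ε_R/d + (d - a)/(a d)` and replacing both denominators
`d` by the smaller `a` gives the classical bound.
-/

lemma one_div_sub_div_eq {a d : ℝ} (ha : a ≠ 0) (hd : d ≠ 0) (r : ℝ) :
    1 / a - (1 - r) / d = r / d + (d - a) / (a * d) := by
  field_simp
  ring

lemma one_div_sub_div_le {a d r : ℝ} (ha : 0 < a) (had : a ≤ d) (hr : 0 ≤ r) :
    1 / a - (1 - r) / d ≤ r / a + (d - a) / a ^ 2 := by
  have hd : 0 < d := ha.trans_le had
  rw [one_div_sub_div_eq ha.ne' hd.ne', sq]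
  gcongr

theorem tight_le_classical_general (γ εT εR : ℝ)
    (hγ0 : 0 ≤ γ) (hγ1 : γ < 1)
    (hεT0 : 0 ≤ εT) (hεR0 : 0 ≤ εR) :
    1 / (1 - γ) - (1 - εR) / (1 - γ * (1 - εT / 2)) ≤
      εR / (1 - γ) + γ * εT / (2 * (1 - γ) ^ 2) := by
  have hgap : (1 - γ * (1 - εT / 2)) - (1 - γ) = γ * εT / 2 := by ring
  have hle : 1 - γ ≤ 1 - γ * (1 - εT / 2) := by linarith [mul_nonneg hγ0 hεT0]
  have key := one_div_sub_div_le (sub_pos.mpr hγ1) hle hεR0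
  rwa [hgap, div_div] at key

/-- The tight bound is at most the classical bound. -/
theorem tight_le_classical (γ εT εR : ℝ)
    (hγ0 : 0 ≤ γ) (hγ1 : γ < 1)
    (hεT0 : 0 ≤ εT) (hεT2 : εT ≤ 2) (hεR0 : 0 ≤ εR) (hεR1 : εR ≤ 1) :
    1 / (1 - γ) - (1 - εR) / (1 - γ * (1 - εT / 2)) ≤
      εR / (1 - γ) + γ * εT / (2 * (1 - γ) ^ 2) :=
  tight_le_classical_general γ εT εR hγ0 hγ1 hεT0 hεR0
end

section
/- The tight simulation-lemma bound is achieved: there exist two 2-state Markov reward processes (P, R) and (P̂, R̂) with ‖P_s - P̂_s‖₁ ≤ ε_T and ‖R - R̂‖_∞ ≤ ε_R for all s, whose values at state 1 satisfy V_1 - V̂_1 = 1/(1-γ) - (1-ε_R)/(1 - γ(1-ε_T/2)). Concretely: both states are absorbing in P with R(1)=1, R(2)=0; in P̂, state 1 transitions to state 2 with probability ε_T/2 and to itself with probability 1-ε_T/2, state 2 is absorbing, and R̂(1)=1-ε_R, R̂(2)=0. -/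
/-!
Both processes are instances of the chain `!![a, 1 - a; 0, 1]` (with `a = 1` and
`a = 1 - ε_T/2`), whose `t`-th power is the same chain with parameter `a^t`. With reward `r` in
state `0` and none in the absorbing state, the value of state `0` is therefore the geometric
series `∑ r (γa)^t = r / (1 - γa)`.
-/

open Matrix

noncomputable def mrpValue {S : Type*} [Fintype S] [DecidableEq S]
    (γ : ℝ) (P : Matrix S S ℝ) (R : S → ℝ) (s : S) : ℝ :=
  ∑' t : ℕ, γ ^ t * ∑ s', (P ^ t) s s' * R s'

section AbsorbingChain

variable {R : Type*} [CommRing R]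

def absorbingChain (a : R) : Matrix (Fin 2) (Fin 2) R := !![a, 1 - a; 0, 1]

theorem absorbingChain_one : absorbingChain (1 : R) = 1 := by
  rw [absorbingChain, one_fin_two, sub_self]

theorem absorbingChain_pow (a : R) (t : ℕ) :
    absorbingChain a ^ t = absorbingChain (a ^ t) := by
  induction t with
  | zero => rw [pow_zero, pow_zero, absorbingChain_one]
  | succ n ih =>
    rw [pow_succ, ih, absorbingChain, absorbingChain, absorbingChain, mul_fin_two, pow_succ]
    ext i j
    fin_cases i <;> fin_cases j <;> simp
    ring

end AbsorbingChain

theorem absorbingChain_mem_rowStochastic {a : ℝ} (ha0 : 0 ≤ a) (ha1 : a ≤ 1) :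
    absorbingChain a ∈ rowStochastic ℝ (Fin 2) := by
  refine mem_rowStochastic_iff_sum.2 ⟨fun i j => ?_, fun i => ?_⟩
  · fin_cases i <;> fin_cases j <;> simp [absorbingChain] <;> linarith
  · fin_cases i <;> simp [absorbingChain, Fin.sum_univ_two]

theorem sum_abs_sub_absorbingChain_le (a b : ℝ) (s : Fin 2) :
    ∑ s', |absorbingChain a s s' - absorbingChain b s s'| ≤ 2 * |a - b| := by
  fin_cases s
  · simp [absorbingChain, Fin.sum_univ_two, abs_sub_comm b a]
    linarith
  · simp [absorbingChain]

theorem abs_vecCons_sub_le (r r' : ℝ) (s : Fin 2) : |![r, 0] s - ![r', 0] s| ≤ |r - r'| := by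
  fin_cases s <;> simp

theorem mrpValue_absorbingChain_zero {γ a : ℝ} (h : |γ * a| < 1) (r : ℝ) :
    mrpValue γ (absorbingChain a) ![r, 0] 0 = r / (1 - γ * a) := by
  have hterm (t : ℕ) :
      γ ^ t * ∑ s', (absorbingChain a ^ t) 0 s' * ![r, 0] s' = r * (γ * a) ^ t := by
    rw [absorbingChain_pow]
    simp [absorbingChain, Fin.sum_univ_two, mul_pow]
    ring
  simp only [mrpValue, hterm, tsum_mul_left, tsum_geometric_of_abs_lt_one h, div_eq_mul_inv]

theorem tight_bound_achieved_general (γ εT εR : ℝ)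
    (hγ0 : 0 ≤ γ) (hγ1 : γ < 1)
    (hεT0 : 0 ≤ εT) (hεT2 : εT ≤ 2) (hεR0 : 0 ≤ εR) :
    ∃ (P Phat : Matrix (Fin 2) (Fin 2) ℝ) (R Rhat : Fin 2 → ℝ),
      (∀ s s', 0 ≤ P s s') ∧ (∀ s, ∑ s', P s s' = 1) ∧
      (∀ s s', 0 ≤ Phat s s') ∧ (∀ s, ∑ s', Phat s s' = 1) ∧
      (∀ s, ∑ s', |P s s' - Phat s s'| ≤ εT) ∧
      (∀ s, |R s - Rhat s| ≤ εR) ∧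
      P = 1 ∧ Phat = !![1 - εT / 2, εT / 2; 0, 1] ∧
      R = ![1, 0] ∧ Rhat = ![1 - εR, 0] ∧
      (∑' t : ℕ, γ ^ t * ∑ s', (P ^ t) 0 s' * R s') -
          (∑' t : ℕ, γ ^ t * ∑ s', (Phat ^ t) 0 s' * Rhat s') =
        1 / (1 - γ) - (1 - εR) / (1 - γ * (1 - εT / 2)) := by
  set a := 1 - εT / 2 with ha
  have ha0 : 0 ≤ a := by linarith
  have ha1 : a ≤ 1 := by linarith
  have hP := absorbingChain_mem_rowStochastic zero_le_one le_rfl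
  have hPhat := absorbingChain_mem_rowStochastic ha0 ha1
  refine ⟨absorbingChain 1, absorbingChain a, ![1, 0], ![1 - εR, 0],
    fun _ _ => nonneg_of_mem_rowStochastic hP, sum_row_of_mem_rowStochastic hP,
    fun _ _ => nonneg_of_mem_rowStochastic hPhat, sum_row_of_mem_rowStochastic hPhat,
    fun s => ?_, fun s => ?_, absorbingChain_one, ?_, rfl, rfl, ?_⟩
  · calc _ ≤ 2 * |1 - a| := sum_abs_sub_absorbingChain_le 1 a s
      _ = εT := by rw [abs_of_nonneg (by linarith)]; ring
  · calc _ ≤ |1 - (1 - εR)| := abs_vecCons_sub_le 1 (1 - εR) s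
      _ = εR := by rw [sub_sub_cancel, abs_of_nonneg hεR0]
  · rw [absorbingChain, sub_sub_cancel]
  · have hγa : |γ * a| < 1 := by
      rw [abs_of_nonneg (by positivity)]
      nlinarith
    change mrpValue γ _ _ 0 - mrpValue γ _ _ 0 = _
    rw [mrpValue_absorbingChain_zero (by rwa [mul_one, abs_of_nonneg hγ0]),
      mrpValue_absorbingChain_zero hγa, mul_one]

/-- The tight simulation-lemma bound is achieved by an explicit pair of 2-state MRPs. -/
theorem tight_bound_achieved (γ εT εR : ℝ)
    (hγ0 : 0 ≤ γ) (hγ1 : γ < 1)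
    (hεT0 : 0 ≤ εT) (hεT2 : εT ≤ 2) (hεR0 : 0 ≤ εR) (hεR1 : εR ≤ 1) :
    ∃ (P Phat : Matrix (Fin 2) (Fin 2) ℝ) (R Rhat : Fin 2 → ℝ),
      (∀ s s', 0 ≤ P s s') ∧ (∀ s, ∑ s', P s s' = 1) ∧
      (∀ s s', 0 ≤ Phat s s') ∧ (∀ s, ∑ s', Phat s s' = 1) ∧
      (∀ s, ∑ s', |P s s' - Phat s s'| ≤ εT) ∧
      (∀ s, |R s - Rhat s| ≤ εR) ∧
      P = 1 ∧ Phat = !![1 - εT / 2, εT / 2; 0, 1] ∧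
      R = ![1, 0] ∧ Rhat = ![1 - εR, 0] ∧
      (∑' t : ℕ, γ ^ t * ∑ s', (P ^ t) 0 s' * R s') -
          (∑' t : ℕ, γ ^ t * ∑ s', (Phat ^ t) 0 s' * Rhat s') =
        1 / (1 - γ) - (1 - εR) / (1 - γ * (1 - εT / 2)) :=
  tight_bound_achieved_general γ εT εR hγ0 hγ1 hεT0 hεT2 hεR0
end

section
/- Sub-stochastic discounted drift bound: let Q, Q̂ be matrices with nonnegative entries whose rows each sum to exactly γ ∈ [0,1), and suppose each row overlap satisfies ∑_{s'} min(Q_{s,s'}, Q̂_{s,s'}) ≥ γ - δ for some δ ∈ [0,γ]. Then for every t and initial state s₀, ∑_s min((Q^t)_{s₀,s}, (Q̂^t)_{s₀,s}) ≥ (γ - δ)^t. -/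
/-!
Let `P` be the entrywise minimum of `Q` and `Q̂`. It is nonnegative and dominated by both
matrices, so by monotonicity of powers of nonnegative matrices `(P ^ t) s₀ s` is at most
`min ((Q ^ t) s₀ s) ((Q̂ ^ t) s₀ s)`. The rows of `P` sum to at least `γ - δ ≥ 0`, hence the
rows of `P ^ t` sum to at least `(γ - δ) ^ t`.
-/

open Finset

namespace Matrix

variable {n α : Type*} [Fintype n] [DecidableEq n] [Semiring α] [PartialOrder α]
  [IsOrderedRing α]

theorem pow_apply_le_pow_apply_of_le {A B : Matrix n n α} (hA : ∀ i j, 0 ≤ A i j)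
    (hAB : ∀ i j, A i j ≤ B i j) (k : ℕ) (i j : n) : (A ^ k) i j ≤ (B ^ k) i j := by
  have hB : ∀ i j, 0 ≤ B i j := fun i j => (hA i j).trans (hAB i j)
  induction k generalizing j with
  | zero => rfl
  | succ k ih =>
    simp only [pow_succ, mul_apply]
    exact sum_le_sum fun l _ =>
      mul_le_mul (ih l) (hAB l j) (hA l j) (pow_apply_nonneg hB k i l)

theorem pow_le_sum_pow_apply_of_le_sum {A : Matrix n n α} {c : α} (hA : ∀ i j, 0 ≤ A i j)
    (hc : 0 ≤ c) (hrow : ∀ i, c ≤ ∑ j, A i j) (k : ℕ) (i : n) :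
    c ^ k ≤ ∑ j, (A ^ k) i j := by
  induction k generalizing i with
  | zero => simp [one_apply]
  | succ k ih =>
    calc c ^ (k + 1) = c * c ^ k := pow_succ' c k
      _ ≤ (∑ l, A i l) * c ^ k := mul_le_mul_of_nonneg_right (hrow i) (pow_nonneg hc k)
      _ = ∑ l, A i l * c ^ k := sum_mul _ _ _
      _ ≤ ∑ l, A i l * ∑ j, (A ^ k) l j :=
        sum_le_sum fun l _ => mul_le_mul_of_nonneg_left (ih l) (hA i l)
      _ = ∑ j, (A ^ (k + 1)) i j := by
        simp only [pow_succ', mul_apply, mul_sum]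
        exact sum_comm

end Matrix

theorem substochastic_overlap_bound_general {S : Type*} [Fintype S] [DecidableEq S]
    (Q Qhat : Matrix S S ℝ) (γ δ : ℝ)
    (hδγ : δ ≤ γ)
    (hQ : ∀ s s', 0 ≤ Q s s')
    (hQhat : ∀ s s', 0 ≤ Qhat s s')
    (hover : ∀ s, γ - δ ≤ ∑ s', min (Q s s') (Qhat s s')) :
    ∀ (t : ℕ) (s₀ : S), (γ - δ) ^ t ≤ ∑ s, min ((Q ^ t) s₀ s) ((Qhat ^ t) s₀ s) := by
  intro t s₀
  let P : Matrix S S ℝ := Matrix.of fun s s' => min (Q s s') (Qhat s s')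
  have hP : ∀ s s', 0 ≤ P s s' := fun s s' => le_min (hQ s s') (hQhat s s')
  calc (γ - δ) ^ t ≤ ∑ s, (P ^ t) s₀ s :=
        Matrix.pow_le_sum_pow_apply_of_le_sum hP (sub_nonneg.mpr hδγ) hover t s₀
    _ ≤ ∑ s, min ((Q ^ t) s₀ s) ((Qhat ^ t) s₀ s) := sum_le_sum fun s _ =>
        le_min (Matrix.pow_apply_le_pow_apply_of_le hP (fun _ _ => min_le_left _ _) t s₀ s)
          (Matrix.pow_apply_le_pow_apply_of_le hP (fun _ _ => min_le_right _ _) t s₀ s)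

/-- Sub-stochastic discounted drift bound. -/
theorem substochastic_overlap_bound {S : Type*} [Fintype S] [DecidableEq S]
    (Q Qhat : Matrix S S ℝ) (γ δ : ℝ)
    (hγ0 : 0 ≤ γ) (hγ1 : γ < 1) (hδ0 : 0 ≤ δ) (hδγ : δ ≤ γ)
    (hQ : ∀ s s', 0 ≤ Q s s') (hQrow : ∀ s, ∑ s', Q s s' = γ)
    (hQhat : ∀ s s', 0 ≤ Qhat s s') (hQhatrow : ∀ s, ∑ s', Qhat s s' = γ)
    (hover : ∀ s, γ - δ ≤ ∑ s', min (Q s s') (Qhat s s')) :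
    ∀ (t : ℕ) (s₀ : S), (γ - δ) ^ t ≤ ∑ s, min ((Q ^ t) s₀ s) ((Qhat ^ t) s₀ s) :=
  substochastic_overlap_bound_general Q Qhat γ δ hδγ hQ hQhat hover
end

section
/- Hierarchical (options) value bound: let Q, Q̂ be nonnegative matrices whose rows sum to γ ∈ [0,1) with per-entry difference |Q_{s,s'} - Q̂_{s,s'}| ≤ ε_T and Q_{s,s} = Q̂_{s,s} = 0 on an (|S|+1)-state augmented space including an absorbing state, and rewards R, R̂ ∈ [0, R_MAX]^S with ‖R - R̂‖_∞ ≤ ε_R. If each row overlap satisfies ∑_{s'} min(Q_{s,s'}, Q̂_{s,s'}) ≥ γ - (|S|-1)ε_T, then the values V_s = ∑_{t≥0} ⟨(Q^t)_s, R⟩ and V̂_s (analogously) satisfy |V_s - V̂_s| ≤ R_MAX/(1-γ) - (R_MAX - ε_R)/(1 - γ + (|S|-1)ε_T). -/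
/-!
Let `M = min Q Q̂` entrywise. Then `0 ≤ Mᵗ ≤ Qᵗ, Q̂ᵗ` entrywise, and the overlap hypothesis makes
every row of `M` sum to at least `β = γ - (|S| - 1) εT`, so every row of `Mᵗ` sums to at least `βᵗ`.
At time `t` the mass `Mᵗ` is shared by both chains, where the rewards differ by at most `εR`, while
the unshared mass `Qᵗ - Mᵗ` earns at most `RMAX`; hence the `t`-th terms of `V` and `V̂` differ by at
most `RMAX γᵗ - (RMAX - εR) βᵗ`, and summing the two geometric series gives the bound.
-/

open Finset

namespace Matrix

variable {ι α : Type*} [Fintype ι] [DecidableEq ι]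

theorem sum_pow_succ_apply [Semiring α] (A : Matrix ι ι α) (t : ℕ) (i : ι) :
    ∑ j, (A ^ (t + 1)) i j = ∑ k, A i k * ∑ j, (A ^ t) k j := by
  simp only [pow_succ', mul_apply, mul_sum]
  exact sum_comm

theorem sum_pow_apply_of_sum_apply_eq [Semiring α] {A : Matrix ι ι α} {γ : α}
    (hA : ∀ i, ∑ j, A i j = γ) (t : ℕ) (i : ι) : ∑ j, (A ^ t) i j = γ ^ t := by
  induction t generalizing i with
  | zero => simp [one_apply]
  | succ t ih => rw [sum_pow_succ_apply, pow_succ']; simp only [ih, ← sum_mul, hA]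

variable [Semiring α] [PartialOrder α] [IsOrderedRing α]

theorem pow_le_sum_pow_apply {A : Matrix ι ι α} {β : α} (hA : ∀ i j, 0 ≤ A i j) (hβ : 0 ≤ β)
    (hrow : ∀ i, β ≤ ∑ j, A i j) (t : ℕ) (i : ι) : β ^ t ≤ ∑ j, (A ^ t) i j := by
  induction t generalizing i with
  | zero => simp [one_apply]
  | succ t ih =>
    calc β ^ (t + 1) = β * β ^ t := pow_succ' β t
      _ ≤ (∑ k, A i k) * β ^ t := mul_le_mul_of_nonneg_right (hrow i) (pow_nonneg hβ t)
      _ = ∑ k, A i k * β ^ t := sum_mul _ _ _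
      _ ≤ ∑ k, A i k * ∑ j, (A ^ t) k j :=
        sum_le_sum fun k _ => mul_le_mul_of_nonneg_left (ih k) (hA i k)
      _ = ∑ j, (A ^ (t + 1)) i j := (sum_pow_succ_apply A t i).symm

theorem pow_apply_le_pow_apply {A B : Matrix ι ι α} (hA : ∀ i j, 0 ≤ A i j)
    (hAB : ∀ i j, A i j ≤ B i j) (t : ℕ) (i j : ι) : (A ^ t) i j ≤ (B ^ t) i j := by
  induction t generalizing j with
  | zero => rfl
  | succ t ih =>
    simp only [pow_succ, mul_apply]
    exact sum_le_sum fun k _ => mul_le_mul (ih k) (hAB k j) (hA k j)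
      (pow_apply_nonneg (fun i j => (hA i j).trans (hAB i j)) t i k)

end Matrix

open Matrix

section DiscountedValue

variable {ι : Type*} [Fintype ι] [DecidableEq ι] {Q Qhat : Matrix ι ι ℝ} {R Rhat : ι → ℝ}
  {γ β εR RMAX : ℝ}

theorem summable_sum_pow_apply_mul (hγ0 : 0 ≤ γ) (hγ1 : γ < 1) (hQ : ∀ a b, 0 ≤ Q a b)
    (hQrow : ∀ a, ∑ b, Q a b = γ) (hR : ∀ a, R a ∈ Set.Icc 0 RMAX) (a : ι) :
    Summable fun t : ℕ => ∑ b, (Q ^ t) a b * R b := by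
  refine (summable_geometric_of_lt_one hγ0 hγ1).mul_left RMAX |>.of_nonneg_of_le
    (fun t => sum_nonneg fun b _ => mul_nonneg (pow_apply_nonneg hQ t a b) (hR b).1)
    fun t => ?_
  calc ∑ b, (Q ^ t) a b * R b ≤ ∑ b, (Q ^ t) a b * RMAX :=
        sum_le_sum fun b _ => mul_le_mul_of_nonneg_left (hR b).2 (pow_apply_nonneg hQ t a b)
    _ = RMAX * γ ^ t := by rw [← sum_mul, sum_pow_apply_of_sum_apply_eq hQrow, mul_comm]

theorem sum_pow_apply_mul_sub_le (hQ : ∀ a b, 0 ≤ Q a b) (hQrow : ∀ a, ∑ b, Q a b = γ)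
    (hQhat : ∀ a b, 0 ≤ Qhat a b) (hR : ∀ a, R a ≤ RMAX) (hRhat : ∀ a, 0 ≤ Rhat a)
    (hdiff : ∀ a, R a - Rhat a ≤ εR) (hεR : εR ≤ RMAX) (hβ : 0 ≤ β)
    (hover : ∀ a, β ≤ ∑ b, min (Q a b) (Qhat a b)) (t : ℕ) (a : ι) :
    ∑ b, (Q ^ t) a b * R b - ∑ b, (Qhat ^ t) a b * Rhat b ≤
      RMAX * γ ^ t - (RMAX - εR) * β ^ t := by
  set M : Matrix ι ι ℝ := of fun a b => min (Q a b) (Qhat a b)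
  have hM : ∀ a b, 0 ≤ M a b := fun a b => le_min (hQ a b) (hQhat a b)
  have hMQ : ∀ b, (M ^ t) a b ≤ (Q ^ t) a b :=
    pow_apply_le_pow_apply hM (fun _ _ => min_le_left _ _) t a
  have hMQhat : ∀ b, (M ^ t) a b ≤ (Qhat ^ t) a b :=
    pow_apply_le_pow_apply hM (fun _ _ => min_le_right _ _) t a
  have hterm : ∀ b, (Q ^ t) a b * R b - (M ^ t) a b * Rhat b ≤
      (Q ^ t) a b * RMAX - (M ^ t) a b * (RMAX - εR) := fun b => by
    nlinarith [mul_le_mul_of_nonneg_left (hdiff b) (pow_apply_nonneg hM t a b),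
      mul_le_mul_of_nonneg_left (hR b) (sub_nonneg.mpr (hMQ b))]
  calc ∑ b, (Q ^ t) a b * R b - ∑ b, (Qhat ^ t) a b * Rhat b
      ≤ ∑ b, ((Q ^ t) a b * R b - (M ^ t) a b * Rhat b) := by
        rw [sum_sub_distrib]
        exact sub_le_sub_left
          (sum_le_sum fun b _ => mul_le_mul_of_nonneg_right (hMQhat b) (hRhat b)) _
    _ ≤ ∑ b, ((Q ^ t) a b * RMAX - (M ^ t) a b * (RMAX - εR)) := sum_le_sum fun b _ => hterm b
    _ = RMAX * γ ^ t - (RMAX - εR) * ∑ b, (M ^ t) a b := by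
        rw [sum_sub_distrib, ← sum_mul, ← sum_mul, sum_pow_apply_of_sum_apply_eq hQrow]
        ring
    _ ≤ RMAX * γ ^ t - (RMAX - εR) * β ^ t := sub_le_sub_left
        (mul_le_mul_of_nonneg_left (pow_le_sum_pow_apply hM hβ hover t a) (sub_nonneg.mpr hεR)) _

theorem tsum_sum_pow_apply_mul_sub_le (hγ0 : 0 ≤ γ) (hγ1 : γ < 1)
    (hQ : ∀ a b, 0 ≤ Q a b) (hQrow : ∀ a, ∑ b, Q a b = γ)
    (hQhat : ∀ a b, 0 ≤ Qhat a b) (hQhatrow : ∀ a, ∑ b, Qhat a b = γ)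
    (hR : ∀ a, R a ∈ Set.Icc 0 RMAX) (hRhat : ∀ a, Rhat a ∈ Set.Icc 0 RMAX)
    (hdiff : ∀ a, R a - Rhat a ≤ εR) (hεR : εR ≤ RMAX) (hβ : 0 ≤ β)
    (hover : ∀ a, β ≤ ∑ b, min (Q a b) (Qhat a b)) (a : ι) :
    (∑' t : ℕ, ∑ b, (Q ^ t) a b * R b) - ∑' t : ℕ, ∑ b, (Qhat ^ t) a b * Rhat b ≤
      RMAX / (1 - γ) - (RMAX - εR) / (1 - β) := by
  have hβγ : β ≤ γ := (hover a).trans <| (hQrow a).symm ▸ sum_le_sum fun b _ => min_le_left _ _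
  have hgeom : HasSum (fun t : ℕ => RMAX * γ ^ t - (RMAX - εR) * β ^ t)
      (RMAX / (1 - γ) - (RMAX - εR) / (1 - β)) := by
    simp only [div_eq_mul_inv]
    exact ((hasSum_geometric_of_lt_one hγ0 hγ1).mul_left RMAX).sub
      ((hasSum_geometric_of_lt_one hβ (hβγ.trans_lt hγ1)).mul_left (RMAX - εR))
  refine hasSum_le (fun t => ?_)
    ((summable_sum_pow_apply_mul hγ0 hγ1 hQ hQrow hR a).hasSum.sub
      (summable_sum_pow_apply_mul hγ0 hγ1 hQhat hQhatrow hRhat a).hasSum) hgeom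
  exact sum_pow_apply_mul_sub_le hQ hQrow hQhat (fun b => (hR b).2) (fun b => (hRhat b).1)
    hdiff hεR hβ hover t a

end DiscountedValue

theorem hierarchy_value_bound_general {S : Type*} [Fintype S] [DecidableEq S]
    (Q Qhat : Matrix (Option S) (Option S) ℝ) (R Rhat : Option S → ℝ)
    (γ εT εR RMAX : ℝ)
    (hγ0 : 0 ≤ γ) (hγ1 : γ < 1) (hεR : εR ≤ RMAX)
    (hγεT : 0 ≤ γ - ((Fintype.card S : ℝ) - 1) * εT)
    (hQ : ∀ a b, 0 ≤ Q a b) (hQrow : ∀ a, ∑ b, Q a b = γ)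
    (hQhat : ∀ a b, 0 ≤ Qhat a b) (hQhatrow : ∀ a, ∑ b, Qhat a b = γ)
    (hRnn : ∀ a, R a ∈ Set.Icc (0 : ℝ) RMAX) (hRhatnn : ∀ a, Rhat a ∈ Set.Icc (0 : ℝ) RMAX)
    (hRdiff : ∀ a, |R a - Rhat a| ≤ εR)
    (hover : ∀ a, γ - ((Fintype.card S : ℝ) - 1) * εT ≤ ∑ b, min (Q a b) (Qhat a b))
    (V Vhat : Option S → ℝ)
    (hV : ∀ a, V a = ∑' t : ℕ, ∑ b, (Q ^ t) a b * R b)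
    (hVhat : ∀ a, Vhat a = ∑' t : ℕ, ∑ b, (Qhat ^ t) a b * Rhat b) :
    ∀ a, |V a - Vhat a| ≤
      RMAX / (1 - γ) - (RMAX - εR) / (1 - γ + ((Fintype.card S : ℝ) - 1) * εT) := by
  intro a
  have hden : 1 - γ + ((Fintype.card S : ℝ) - 1) * εT =
      1 - (γ - ((Fintype.card S : ℝ) - 1) * εT) := by ring
  rw [hV, hVhat, abs_sub_le_iff, hden]
  constructor
  · exact tsum_sum_pow_apply_mul_sub_le hγ0 hγ1 hQ hQrow hQhat hQhatrow hRnn hRhatnn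
      (fun b => (abs_sub_le_iff.mp (hRdiff b)).1) hεR hγεT hover a
  · exact tsum_sum_pow_apply_mul_sub_le hγ0 hγ1 hQhat hQhatrow hQ hQrow hRhatnn hRnn
      (fun b => (abs_sub_le_iff.mp (hRdiff b)).2) hεR hγεT
      (fun b => by simpa only [min_comm] using hover b) a

/-- Hierarchical (options) value bound on an augmented state space `Option S`,
where `none` plays the role of the absorbing state `s_x` with zero reward. -/
theorem hierarchy_value_bound {S : Type*} [Fintype S] [DecidableEq S]
    (Q Qhat : Matrix (Option S) (Option S) ℝ) (R Rhat : Option S → ℝ)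
    (γ εT εR RMAX : ℝ)
    (hγ0 : 0 ≤ γ) (hγ1 : γ < 1) (hRMAX : 0 < RMAX)
    (hεT0 : 0 ≤ εT) (hεR0 : 0 ≤ εR) (hεR : εR ≤ RMAX)
    (hcard : 2 ≤ Fintype.card S)
    (hγεT : 0 ≤ γ - ((Fintype.card S : ℝ) - 1) * εT)
    (hQ : ∀ a b, 0 ≤ Q a b) (hQrow : ∀ a, ∑ b, Q a b = γ)
    (hQhat : ∀ a b, 0 ≤ Qhat a b) (hQhatrow : ∀ a, ∑ b, Qhat a b = γ)
    (hdiag : ∀ a, Q a a = 0) (hdiaghat : ∀ a, Qhat a a = 0)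
    (hentry : ∀ a b, |Q a b - Qhat a b| ≤ εT)
    (hRnn : ∀ a, R a ∈ Set.Icc (0 : ℝ) RMAX) (hRhatnn : ∀ a, Rhat a ∈ Set.Icc (0 : ℝ) RMAX)
    (hRabs : R none = 0) (hRhatabs : Rhat none = 0)
    (hRdiff : ∀ a, |R a - Rhat a| ≤ εR)
    (hover : ∀ a, γ - ((Fintype.card S : ℝ) - 1) * εT ≤ ∑ b, min (Q a b) (Qhat a b))
    (V Vhat : Option S → ℝ)
    (hV : ∀ a, V a = ∑' t : ℕ, ∑ b, (Q ^ t) a b * R b)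
    (hVhat : ∀ a, Vhat a = ∑' t : ℕ, ∑ b, (Qhat ^ t) a b * Rhat b) :
    ∀ a, |V a - Vhat a| ≤
      RMAX / (1 - γ) - (RMAX - εR) / (1 - γ + ((Fintype.card S : ℝ) - 1) * εT) :=
  hierarchy_value_bound_general Q Qhat R Rhat γ εT εR RMAX hγ0 hγ1 hεR hγεT hQ hQrow hQhat hQhatrow
    hRnn hRhatnn hRdiff hover V Vhat hV hVhat
end

section
/- One-step recursion of the classical simulation lemma: if P, P̂ are row-stochastic with ‖P_s - P̂_s‖₁ ≤ ε_T for all s, R, R̂ : S → [0,1] with ‖R - R̂‖_∞ ≤ ε_R, γ ∈ [0,1), and V, V̂ are the corresponding discounted values, then for all s, |V_s - V̂_s| ≤ ε_R + γε_T/(2(1-γ)) + γ‖V - V̂‖_∞. -/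
/-!
Write `V_s - V̂_s = (R_s - R̂_s) + γ ⟨P_s - P̂_s, V⟩ + γ ⟨P̂_s, V - V̂⟩`. The last term is a
convex combination of the entries of `V - V̂`, hence at most `‖V - V̂‖_∞`. Since `P_s` and `P̂_s`
have the same total mass, `V` may be replaced by `V - c𝟙` in the middle term; centering at the
midpoint `c` of the range `[0, 1/(1-γ)]` of `V` gives `|V - c𝟙| ≤ 1/(2(1-γ))` and so the bound
`ε_T/(2(1-γ))` rather than `ε_T/(1-γ)`.
-/

open Finset

theorem abs_sum_sub_mul_le_of_mem_Icc {ι : Type*} (s : Finset ι) {p q v : ι → ℝ} {a b : ℝ}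
    (hpq : ∑ i ∈ s, p i = ∑ i ∈ s, q i) (hv : ∀ i ∈ s, v i ∈ Set.Icc a b) :
    |∑ i ∈ s, (p i - q i) * v i| ≤ (b - a) / 2 * ∑ i ∈ s, |p i - q i| := by
  set c := (a + b) / 2 with hc
  have hcenter : ∑ i ∈ s, (p i - q i) * v i = ∑ i ∈ s, (p i - q i) * (v i - c) := by
    simp only [mul_sub, sum_sub_distrib (f := fun i => (p i - q i) * v i), ← sum_mul,
      sum_sub_distrib, hpq, sub_self, zero_mul, sub_zero]
  calc |∑ i ∈ s, (p i - q i) * v i|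
      = |∑ i ∈ s, (p i - q i) * (v i - c)| := by rw [hcenter]
    _ ≤ ∑ i ∈ s, |p i - q i| * |v i - c| := by
      simpa only [abs_mul] using abs_sum_le_sum_abs (fun i => (p i - q i) * (v i - c)) s
    _ ≤ ∑ i ∈ s, |p i - q i| * ((b - a) / 2) := by
      gcongr with i hi
      obtain ⟨hai, hib⟩ := hv i hi
      rw [abs_le, hc]; constructor <;> linarith
    _ = (b - a) / 2 * ∑ i ∈ s, |p i - q i| := by rw [← sum_mul, mul_comm]

theorem abs_sum_mul_le_of_sum_eq_one {ι : Type*} (s : Finset ι) {q w : ι → ℝ} {M : ℝ}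
    (hq : ∀ i ∈ s, 0 ≤ q i) (hq1 : ∑ i ∈ s, q i = 1) (hw : ∀ i ∈ s, |w i| ≤ M) :
    |∑ i ∈ s, q i * w i| ≤ M :=
  calc |∑ i ∈ s, q i * w i|
      ≤ ∑ i ∈ s, q i * |w i| := by
        refine (abs_sum_le_sum_abs _ _).trans_eq (sum_congr rfl fun i hi => ?_)
        rw [abs_mul, abs_of_nonneg (hq i hi)]
    _ ≤ ∑ i ∈ s, q i * M := by
        gcongr with i hi
        · exact hq i hi
        · exact hw i hi
    _ = M := by rw [← sum_mul, hq1, one_mul]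

theorem one_step_recursion_general {S : Type*} [Fintype S]
    (P Phat : Matrix S S ℝ) (R Rhat : S → ℝ) (γ εT εR : ℝ)
    (hγ0 : 0 ≤ γ)
    (hProw : ∀ s, ∑ s', P s s' = 1)
    (hPhat : ∀ s s', 0 ≤ Phat s s') (hPhatrow : ∀ s, ∑ s', Phat s s' = 1)
    (hTdiff : ∀ s, ∑ s', |P s s' - Phat s s'| ≤ εT)
    (hRdiff : ∀ s, |R s - Rhat s| ≤ εR)
    (V Vhat : S → ℝ)
    (hVbd : ∀ s, V s ∈ Set.Icc (0 : ℝ) (1 / (1 - γ)))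
    (hV : ∀ s, V s = R s + γ * ∑ s', P s s' * V s')
    (hVhat : ∀ s, Vhat s = Rhat s + γ * ∑ s', Phat s s' * Vhat s') :
    ∀ s, |V s - Vhat s| ≤ εR + γ * εT / (2 * (1 - γ)) + γ * ⨆ s', |V s' - Vhat s'| := by
  intro s
  set M := ⨆ s', |V s' - Vhat s'|
  have hdecomp : V s - Vhat s = (R s - Rhat s) + γ * ∑ t, (P s t - Phat s t) * V t
      + γ * ∑ t, Phat s t * (V t - Vhat t) := by
    rw [hV s, hVhat s]
    simp only [sub_mul, mul_sub, sum_sub_distrib]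
    ring
  have htransition := abs_sum_sub_mul_le_of_mem_Icc univ ((hProw s).trans (hPhatrow s).symm)
    fun t _ => hVbd t
  have hvalue : |∑ t, Phat s t * (V t - Vhat t)| ≤ M :=
    abs_sum_mul_le_of_sum_eq_one univ (fun t _ => hPhat s t) (hPhatrow s)
      fun t _ => le_ciSup (f := fun t => |V t - Vhat t|) (Set.finite_range _).bddAbove t
  have hradius : 0 ≤ (1 / (1 - γ) - 0) / 2 := by linarith [(hVbd s).1, (hVbd s).2]
  calc |V s - Vhat s|
      ≤ |R s - Rhat s| + γ * |∑ t, (P s t - Phat s t) * V t|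
          + γ * |∑ t, Phat s t * (V t - Vhat t)| := by
        rw [hdecomp]
        refine (abs_add_three _ _ _).trans_eq ?_
        rw [abs_mul, abs_mul, abs_of_nonneg hγ0]
    _ ≤ εR + γ * ((1 / (1 - γ) - 0) / 2 * εT) + γ * M := by
        gcongr
        exacts [hRdiff s, htransition.trans (by gcongr; exact hTdiff s)]
    _ = εR + γ * εT / (2 * (1 - γ)) + γ * M := by rw [mul_comm 2, ← div_div]; ring

/-- One-step recursion of the classical simulation lemma. -/
theorem one_step_recursion {S : Type*} [Fintype S] [DecidableEq S] [Nonempty S]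
    (P Phat : Matrix S S ℝ) (R Rhat : S → ℝ) (γ εT εR : ℝ)
    (hγ0 : 0 ≤ γ) (hγ1 : γ < 1)
    (hP : ∀ s s', 0 ≤ P s s') (hProw : ∀ s, ∑ s', P s s' = 1)
    (hPhat : ∀ s s', 0 ≤ Phat s s') (hPhatrow : ∀ s, ∑ s', Phat s s' = 1)
    (hTdiff : ∀ s, ∑ s', |P s s' - Phat s s'| ≤ εT)
    (hR : ∀ s, R s ∈ Set.Icc (0 : ℝ) 1) (hRhat : ∀ s, Rhat s ∈ Set.Icc (0 : ℝ) 1)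
    (hRdiff : ∀ s, |R s - Rhat s| ≤ εR)
    (V Vhat : S → ℝ)
    (hVbd : ∀ s, V s ∈ Set.Icc (0 : ℝ) (1 / (1 - γ)))
    (hVhatbd : ∀ s, Vhat s ∈ Set.Icc (0 : ℝ) (1 / (1 - γ)))
    (hV : ∀ s, V s = R s + γ * ∑ s', P s s' * V s')
    (hVhat : ∀ s, Vhat s = Rhat s + γ * ∑ s', Phat s s' * Vhat s') :
    ∀ s, |V s - Vhat s| ≤ εR + γ * εT / (2 * (1 - γ)) + γ * ⨆ s', |V s' - Vhat s'| :=
  one_step_recursion_general P Phat R Rhat γ εT εR hγ0 hProw hPhat hPhatrow hTdiff hRdiff V Vhat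
    hVbd hV hVhat
end
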